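/- arXiv:2405.16183 — 4 statements merged into one kernel-verified Lean document; each statement's English description precedes it below -/
import Mathlib

section
/- Let f : ℝ^d × ℝ^d × ℝ^k → ℝ^d be a message function. Suppose that for every finite set V, every symmetric edge set E ⊆ V × V, every vertex signal h : V → ℝ^d, and every symmetric edge signal e : V × V → ℝ^k (i.e., e(i,j) = e(j,i)), the message-passing update h'(i) = h(i) + ∑_{j : (i,j) ∈ E} f(h(i), h(j), e(i,j)) satisfies ∑_{i ∈ V} h'(i) = ∑_{i ∈ V} h(i). Then f(a, b, c) = -f(b, a, c) for all a, b ∈ ℝ^d and c ∈ ℝ^k. -/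
/-!
Conservation on the graph with two vertices `true ↦ a`, `false ↦ b` joined by a single undirected
edge labelled `c` says exactly that the two messages along that edge cancel:
`f a b c + f b a c = 0`.
-/

open Finset

def boolEdge : Finset (Bool × Bool) := {(true, false), (false, true)}

theorem boolEdge_symm : ∀ i j : Bool, (i, j) ∈ boolEdge → (j, i) ∈ boolEdge := by decide

theorem sum_add_sum_boolEdge {M : Type*} [AddCommMonoid M] (h : Bool → M) (m : Bool → Bool → M) :
    ∑ i, (h i + ∑ j ∈ univ.filter (fun j => (i, j) ∈ boolEdge), m i j) =
      ∑ i, h i + (m true false + m false true) := by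
  simp [boolEdge, sum_add_distrib, filter_insert, filter_singleton]

/-- Necessity direction of Theorem 3.1 (locally conservative GNN):
if the message-passing update with identity update function conserves the
total sum on every graph, every vertex signal and every symmetric edge
signal, then the message function is antisymmetric in its first two
arguments. -/
theorem locally_conservative_gnn_necessity
    (d k : ℕ)
    (f : (Fin d → ℝ) → (Fin d → ℝ) → (Fin k → ℝ) → (Fin d → ℝ))
    (hcons : ∀ (V : Type) [Fintype V] [DecidableEq V]
      (E : Finset (V × V)), (∀ i j : V, (i, j) ∈ E → (j, i) ∈ E) →
      ∀ (h : V → Fin d → ℝ) (e : V × V → Fin k → ℝ),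
        (∀ i j : V, e (i, j) = e (j, i)) →
        ∑ i, (h i + ∑ j ∈ Finset.univ.filter (fun j => (i, j) ∈ E),
          f (h i) (h j) (e (i, j))) = ∑ i, h i) :
    ∀ (a b : Fin d → ℝ) (c : Fin k → ℝ), f a b c = - f b a c := by
  intro a b c
  have hedge := hcons Bool boolEdge boolEdge_symm (fun v => if v then a else b) (fun _ => c)
    (fun _ _ => rfl)
  rw [sum_add_sum_boolEdge, add_eq_left] at hedge
  simpa using eq_neg_of_add_eq_zero_left hedge
end

section
/- Let V be a finite set, E ⊆ V × V a symmetric edge set, cell volumes Vol : V → ℝ with Vol(i) > 0, face areas S : V × V → ℝ with S(i,j) = S(j,i), face normals n : V × V → ℝ^p with n(i,j) = -n(j,i), symmetric edge signals e : V × V → ℝ^k with e(i,j) = e(j,i), and a flux function F : ℝ^d × ℝ^d × ℝ^k → (p × d real matrices) that is permutation-invariant in its first two arguments, i.e., F(a,b,c) = F(b,a,c) for all a, b, c. Define the FluxGNN layer output h' : V → ℝ^d by Vol(i)·h'(i) = Vol(i)·h(i) - ∑_{j : (i,j) ∈ E} S(i,j) · (n(i,j)ᵀ F(h(i), h(j),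 e(i,j))), where n(i,j)ᵀ M ∈ ℝ^d denotes the vector with components ∑_{α} n(i,j)_α M_{α β}. Then the volume-weighted total is conserved: ∑_{i ∈ V} Vol(i)·h'(i) = ∑_{i ∈ V} Vol(i)·h(i). -/
/-!
The flux through a face is antisymmetric in its two cells: swapping `i` and `j` keeps the area,
the edge signal and (by permutation invariance) the flux matrix, but flips the normal. Summing the
layer update over all cells therefore sums this antisymmetric quantity over the symmetric edge set,
where the contributions of `(i, j)` and `(j, i)` cancel.
-/

open Finset

namespace Finset

theorem sum_eq_zero_of_swap_eq_neg {α M : Type*} [AddCommGroup M] [IsAddTorsionFree M]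
    (E : Finset (α × α)) (hE : ∀ q ∈ E, q.swap ∈ E) (f : α × α → M)
    (hf : ∀ q ∈ E, f q.swap = -f q) :
    ∑ q ∈ E, f q = 0 := by
  have hswap : ∑ q ∈ E, f q = -∑ q ∈ E, f q := calc
    ∑ q ∈ E, f q = ∑ q ∈ E, f q.swap :=
      sum_equiv (Equiv.prodComm α α) (fun q => ⟨hE q, fun hq => q.swap_swap ▸ hE _ hq⟩)
        fun q _ => rfl
    _ = -∑ q ∈ E, f q := by rw [← sum_neg_distrib]; exact sum_congr rfl hf
  exact self_eq_neg.mp hswap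

theorem sum_univ_sum_filter_mem {α β M : Type*} [Fintype α] [Fintype β] [DecidableEq α]
    [DecidableEq β] [AddCommMonoid M] (E : Finset (α × β)) (f : α × β → M) :
    ∑ i, ∑ j ∈ univ.filter (fun j => (i, j) ∈ E), f (i, j) = ∑ q ∈ E, f q :=
  (sum_finset_product E univ _ fun q => by simp).symm

end Finset

section FaceFlux

variable {R ι κ V X Y : Type*} [Ring R] [Fintype ι]

/-- The paper's message `m(i, j)` from `j` to `i` is `-faceFlux S n e F h (i, j)`. -/
def faceFlux (S : V × V → R) (n : V × V → ι → R) (e : V × V → Y)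
    (F : X → X → Y → Matrix ι κ R) (h : V → X) (q : V × V) : κ → R :=
  S q • Matrix.vecMul (n q) (F (h q.1) (h q.2) (e q))

theorem faceFlux_swap (S : V × V → R) (hS : ∀ i j, S (i, j) = S (j, i))
    (n : V × V → ι → R) (hn : ∀ i j, n (i, j) = -n (j, i))
    (e : V × V → Y) (he : ∀ i j, e (i, j) = e (j, i))
    (F : X → X → Y → Matrix ι κ R) (hF : ∀ a b c, F a b c = F b a c) (h : V → X) (i j : V) :
    faceFlux S n e F h (j, i) = -faceFlux S n e F h (i, j) := by
  simp only [faceFlux, hS i j, hn i j, he i j, hF (h j) (h i), Matrix.neg_vecMul, smul_neg, neg_neg]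

end FaceFlux

theorem fluxgnn_conservative_general
    {V : Type*} [Fintype V] [DecidableEq V] (d k p : ℕ)
    (E : Finset (V × V)) (hE : ∀ i j : V, (i, j) ∈ E → (j, i) ∈ E)
    (Vol : V → ℝ)
    (S : V × V → ℝ) (hS : ∀ i j : V, S (i, j) = S (j, i))
    (n : V × V → Fin p → ℝ) (hn : ∀ i j : V, n (i, j) = - n (j, i))
    (e : V × V → Fin k → ℝ) (he : ∀ i j : V, e (i, j) = e (j, i))
    (F : (Fin d → ℝ) → (Fin d → ℝ) → (Fin k → ℝ) → Matrix (Fin p) (Fin d) ℝ)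
    (hF : ∀ a b c, F a b c = F b a c)
    (h h' : V → Fin d → ℝ)
    (hdef : ∀ i : V, Vol i • h' i = Vol i • h i -
      ∑ j ∈ Finset.univ.filter (fun j => (i, j) ∈ E),
        S (i, j) • Matrix.vecMul (n (i, j)) (F (h i) (h j) (e (i, j)))) :
    ∑ i, Vol i • h' i = ∑ i, Vol i • h i := by
  have hnet : ∑ i, ∑ j ∈ univ.filter (fun j => (i, j) ∈ E), faceFlux S n e F h (i, j) = 0 := by
    rw [sum_univ_sum_filter_mem]
    exact sum_eq_zero_of_swap_eq_neg E (fun q => hE q.1 q.2) _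
      fun q _ => faceFlux_swap S hS n hn e he F hF h q.1 q.2
  calc ∑ i, Vol i • h' i
      = ∑ i, (Vol i • h i - ∑ j ∈ univ.filter (fun j => (i, j) ∈ E), faceFlux S n e F h (i, j)) :=
        sum_congr rfl fun i _ => hdef i
    _ = ∑ i, Vol i • h i := by rw [sum_sub_distrib, hnet, sub_zero]

/-- Sufficiency direction of Theorem 3.4: a FluxGNN layer with a flux
function that is permutation-invariant in its first two arguments conserves
the volume-weighted total of the vertex signal. -/
theorem fluxgnn_conservative
    {V : Type*} [Fintype V] [DecidableEq V] (d k p : ℕ)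
    (E : Finset (V × V)) (hE : ∀ i j : V, (i, j) ∈ E → (j, i) ∈ E)
    (Vol : V → ℝ) (hVol : ∀ i, 0 < Vol i)
    (S : V × V → ℝ) (hS : ∀ i j : V, S (i, j) = S (j, i))
    (n : V × V → Fin p → ℝ) (hn : ∀ i j : V, n (i, j) = - n (j, i))
    (e : V × V → Fin k → ℝ) (he : ∀ i j : V, e (i, j) = e (j, i))
    (F : (Fin d → ℝ) → (Fin d → ℝ) → (Fin k → ℝ) → Matrix (Fin p) (Fin d) ℝ)
    (hF : ∀ a b c, F a b c = F b a c)
    (h h' : V → Fin d → ℝ)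
    (hdef : ∀ i : V, Vol i • h' i = Vol i • h i -
      ∑ j ∈ Finset.univ.filter (fun j => (i, j) ∈ E),
        S (i, j) • Matrix.vecMul (n (i, j)) (F (h i) (h j) (e (i, j)))) :
    ∑ i, Vol i • h' i = ∑ i, Vol i • h i :=
  fluxgnn_conservative_general d k p E hE Vol S hS n hn e he F hF h h' hdef
end

section
/- Let F : ℝ^d × ℝ^d × ℝ^k → (p × d real matrices) be a flux function. Suppose that for every face area S ∈ ℝ with S > 0, every face normal n ∈ ℝ^p, and all a, b ∈ ℝ^d and c ∈ ℝ^k, the pair of FluxGNN messages m₁ = -S·nᵀF(a,b,c) and m₂ = S·nᵀF(b,a,c) satisfies m₁ = -m₂ (local conservation for every face geometry, using S(j,i) = S(i,j) and n(j,i) = -n(i,j)). Then F is permutation-invariant in its first two arguments: F(a,b,c) = F(b,a,c) for all a, b ∈ ℝ^d and c ∈ ℝ^k. -/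
/-- Necessity direction of Theorem 3.4: local conservation of the FluxGNN
messages for all face geometries forces the flux function to be
permutation-invariant in its first two arguments. -/
theorem fluxgnn_flux_permutation_invariant
    (d k p : ℕ)
    (F : (Fin d → ℝ) → (Fin d → ℝ) → (Fin k → ℝ) → Matrix (Fin p) (Fin d) ℝ)
    (hcons : ∀ S : ℝ, 0 < S → ∀ (n : Fin p → ℝ) (a b : Fin d → ℝ)
      (c : Fin k → ℝ),
      -(S • Matrix.vecMul n (F a b c)) = -(S • Matrix.vecMul n (F b a c))) :
    ∀ (a b : Fin d → ℝ) (c : Fin k → ℝ), F a b c = F b a c := by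
  intro a b c
  ext i j
  have h := hcons 1 one_pos (Pi.single i 1) a b c
  have h' := congrFun (neg_injective h) j
  simpa [Matrix.vecMul, dotProduct, Pi.single_apply, Finset.sum_ite_eq] using h'
end

section
/- Let V be a finite set, d a natural number, and F : (V → ℝ^d) → (V → ℝ^d) a map satisfying ∑_{v ∈ V} [F(H)](v) = 0 for every H : V → ℝ^d. Fix Δt ∈ ℝ, an initial state H⁽⁰⁾ : V → ℝ^d, and scalars α₀, α₁, α₂, … ∈ ℝ. Define the nonlinear-solver iteration H⁽ⁱ⁺¹⁾ = H⁽ⁱ⁾ - αᵢ • (H⁽ⁱ⁾ - H⁽⁰⁾ - Δt • F(H⁽ⁱ⁾)). Then every iterate conserves the total sum: ∑_{v ∈ V} H⁽ᵏ⁾(v) = ∑_{v ∈ V} H⁽⁰⁾(v) for all k ≥ 0. -/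
/-! Summation over the vertices is a linear functional that kills every output of `F`. A step of
the solver changes `H⁽ⁱ⁾` by a scalar multiple of `H⁽ⁱ⁾ - H⁽⁰⁾ - Δt • F(H⁽ⁱ⁾)`, whose sum vanishes as
soon as `H⁽ⁱ⁾` and `H⁽⁰⁾` have the same sum. Since `α` is only a scalar, this holds for any linear
conserved quantity, whatever step sizes are chosen. -/

section NonlinearSolver

variable {R M N : Type*} [Ring R] [AddCommGroup M] [Module R M] [AddCommGroup N] [Module R N]

/-- Equation (7) of the paper, `α` being the Barzilai–Borwein step size. -/
def solverStep (F : M → M) (Δt α : R) (x₀ x : M) : M :=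
  x - α • (x - x₀ - Δt • F x)

theorem map_solverStep (L : M →ₗ[R] N) {F : M → M} (hF : ∀ x, L (F x) = 0) (Δt α : R)
    {x₀ x : M} (hx : L x = L x₀) : L (solverStep F Δt α x₀ x) = L x := by
  simp [solverStep, hF, hx]

theorem map_solverStep_iterate (L : M →ₗ[R] N) {F : M → M} (hF : ∀ x, L (F x) = 0) (Δt : R)
    (x : ℕ → M) (α : ℕ → R) (hx : ∀ i, x (i + 1) = solverStep F Δt (α i) (x 0) (x i)) :
    ∀ k, L (x k) = L (x 0)
  | 0 => rfl
  | i + 1 => by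
    rw [hx, map_solverStep L hF Δt (α i) (map_solverStep_iterate L hF Δt x α hx i),
      map_solverStep_iterate L hF Δt x α hx i]

end NonlinearSolver

/-- Equation (7) of the paper: the neural nonlinear solver iteration
conserves the total vertex sum whenever the right-hand-side model `F` has
outputs summing to zero over all vertices. -/
theorem neural_nonlinear_solver_conservative
    {V : Type*} [Fintype V] (d : ℕ)
    (F : (V → Fin d → ℝ) → (V → Fin d → ℝ))
    (hF : ∀ H : V → Fin d → ℝ, ∑ v, F H v = 0)
    (Δt : ℝ) (H : ℕ → V → Fin d → ℝ) (α : ℕ → ℝ)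
    (hiter : ∀ i : ℕ,
      H (i + 1) = H i - α i • (H i - H 0 - Δt • F (H i))) :
    ∀ k : ℕ, ∑ v, H k v = ∑ v, H 0 v := by
  let vertexSum : (V → Fin d → ℝ) →ₗ[ℝ] (Fin d → ℝ) := ∑ v, LinearMap.proj v
  simpa [vertexSum] using map_solverStep_iterate vertexSum (by simpa [vertexSum]) Δt H α hiter
end
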